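/- Let v_1,...,v_I be i.i.d. nonnegative random variables with E[v_i²] = 1-δ for δ ∈ [0,1), and let Γ_S = sqrt(I(1-δ)(1+I-I·ξ)/(1-ξ)) for ξ ∈ (0,1). Then P(Σ_i v_i ≥ Γ_S) ≤ 1-ξ. -/

import Mathlib

/-!
Chebyshev's inequality applied to `S = ∑ i, v i`. Independence gives
`Var S = ∑ i, (E[v_i²] - E[v_i]²)`, and Cauchy–Schwarz on the means gives
`I · Var S + (E S)² ≤ I² (1 - δ)`. Under this constraint the Chebyshev bound
`Var S / (Γ_S - E S)²` is maximised over the unknown mean at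
`E S = I (1 - ξ) Γ_S / (I (1 - ξ) + 1)`, and `Γ_S` is chosen exactly so that this maximum is
`1 - ξ`.
-/

open MeasureTheory ProbabilityTheory

namespace ProbabilityTheory

variable {Ω : Type*} {mΩ : MeasurableSpace Ω} {μ : Measure Ω}

lemma meas_ge_le_variance_div_sq_of_integral_lt [IsFiniteMeasure μ] {X : Ω → ℝ}
    (hX : MemLp X 2 μ) {c : ℝ} (hc : μ[X] < c) :
    μ {ω | c ≤ X ω} ≤ ENNReal.ofReal (Var[X; μ] / (c - μ[X]) ^ 2) :=
  (measure_mono fun ω (hω : c ≤ X ω) =>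
    show c - μ[X] ≤ |X ω - μ[X]| from (sub_le_sub_right hω _).trans (le_abs_self _)).trans
    (meas_ge_le_variance_div_sq hX (sub_pos.2 hc))

lemma card_mul_variance_sum_add_sq_integral_le [IsProbabilityMeasure μ] {ι : Type*} [Fintype ι]
    {X : ι → Ω → ℝ} (hX : ∀ i, MemLp (X i) 2 μ) (hindep : iIndepFun X μ) {s : ℝ}
    (hs : ∀ i, μ[fun ω => X i ω ^ 2] = s) :
    (Fintype.card ι : ℝ) * Var[∑ i, X i; μ] + μ[∑ i, X i] ^ 2 ≤
      (Fintype.card ι : ℝ) ^ 2 * s := by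
  have hvar : Var[∑ i, X i; μ] = ∑ i, (s - μ[X i] ^ 2) := by
    rw [IndepFun.variance_sum (fun i _ => hX i) fun i _ j _ hij => hindep.indepFun hij]
    exact Finset.sum_congr rfl fun i _ => by rw [variance_eq_sub (hX i), ← hs i]; rfl
  have hmean : μ[∑ i, X i] = ∑ i, μ[X i] := by
    simp only [Finset.sum_apply]
    exact integral_finsetSum _ fun i _ => (hX i).integrable one_le_two
  have hCS : (∑ i, μ[X i]) ^ 2 ≤ (Fintype.card ι : ℝ) * ∑ i, μ[X i] ^ 2 :=
    sq_sum_le_card_mul_sum_sq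
  rw [hvar, hmean, Finset.sum_sub_distrib, Finset.sum_const, Finset.card_univ, nsmul_eq_mul]
  linarith

end ProbabilityTheory

lemma lt_and_le_mul_sq_sub_of_mul_add_sq_le {n a s V M Γ : ℝ} (hn : 0 < n) (ha : 0 < a)
    (hs : 0 < s) (hΓ0 : 0 ≤ Γ) (hΓ : a * Γ ^ 2 = n * s * (1 + n * a)) (hV : 0 ≤ V)
    (hVM : n * V + M ^ 2 ≤ n ^ 2 * s) :
    M < Γ ∧ V ≤ a * (Γ - M) ^ 2 := by
  have hMs : M ^ 2 ≤ n ^ 2 * s := by nlinarith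
  have hM : M ^ 2 < Γ ^ 2 := lt_of_mul_lt_mul_left (by nlinarith [mul_pos hn hs]) ha.le
  refine ⟨(le_abs_self M).trans_lt (abs_lt_of_sq_lt_sq hM hΓ0), ?_⟩
  have hsq : (n * a + 1) * (n * (a * (Γ - M) ^ 2) - (n ^ 2 * s - M ^ 2)) =
      ((n * a + 1) * M - n * a * Γ) ^ 2 := by
    linear_combination n * hΓ
  have hgap : 0 ≤ n * (a * (Γ - M) ^ 2) - (n ^ 2 * s - M ^ 2) :=
    nonneg_of_mul_nonneg_right (hsq ▸ sq_nonneg _) (by positivity)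
  exact le_of_mul_le_mul_left (by linarith) hn

theorem sum_exceeds_GammaS_bound_general
    {Ω : Type*} {mΩ : MeasurableSpace Ω} (μ : Measure Ω) [IsProbabilityMeasure μ]
    (I : ℕ) (hI : 1 ≤ I) (v : Fin I → Ω → ℝ)
    (hindep : iIndepFun (m := fun _ => Real.measurableSpace) v μ)
    (hL2 : ∀ i, MemLp (v i) 2 μ)
    (δ : ℝ) (hδ1 : δ < 1)
    (hmom : ∀ i, μ[fun ω => (v i ω) ^ 2] = 1 - δ)
    (ξ : ℝ) (hξ1 : ξ < 1)
    (ΓS : ℝ)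
    (hΓS : ΓS = Real.sqrt ((I : ℝ) * (1 - δ) * (1 + (I : ℝ) - (I : ℝ) * ξ) / (1 - ξ))) :
    μ {ω | ΓS ≤ ∑ i, v i ω} ≤ ENNReal.ofReal (1 - ξ) := by
  have hI0 : (0 : ℝ) < I := by exact_mod_cast hI
  have hξ' : 0 < 1 - ξ := sub_pos.2 hξ1
  have hΓ : (1 - ξ) * ΓS ^ 2 = I * (1 - δ) * (1 + I * (1 - ξ)) := by
    rw [hΓS, Real.sq_sqrt (by rw [show 1 + (I : ℝ) - I * ξ = 1 + I * (1 - ξ) by ring]; bound)]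
    field_simp
    ring
  have hVM := card_mul_variance_sum_add_sq_integral_le hL2 hindep hmom
  rw [Fintype.card_fin] at hVM
  obtain ⟨hlt, hle⟩ := lt_and_le_mul_sq_sub_of_mul_add_sq_le hI0 hξ' (sub_pos.2 hδ1)
    (hΓS ▸ Real.sqrt_nonneg _) hΓ (variance_nonneg _ μ) hVM
  calc μ {ω | ΓS ≤ ∑ i, v i ω}
      = μ {ω | ΓS ≤ (∑ i, v i) ω} := by simp only [Finset.sum_apply]
    _ ≤ _ := meas_ge_le_variance_div_sq_of_integral_lt (memLp_finsetSum' _ fun i _ => hL2 i) hlt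
    _ ≤ ENNReal.ofReal (1 - ξ) :=
      ENNReal.ofReal_le_ofReal ((div_le_iff₀ (pow_pos (sub_pos.2 hlt) 2)).2 hle)

/-- For i.i.d. nonnegative random variables with common second moment `1 - δ`, the sum
satisfies `P(Σ_i v_i ≥ Γ_S) ≤ 1 - ξ` with `Γ_S = √(I(1-δ)(1+I-Iξ)/(1-ξ))`. -/
theorem sum_exceeds_GammaS_bound
    {Ω : Type*} {mΩ : MeasurableSpace Ω} (μ : Measure Ω) [IsProbabilityMeasure μ]
    (I : ℕ) (hI : 1 ≤ I) (v : Fin I → Ω → ℝ)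
    (hmeas : ∀ i, Measurable (v i))
    (hindep : iIndepFun (m := fun _ => Real.measurableSpace) v μ)
    (hident : ∀ i j, Measure.map (v i) μ = Measure.map (v j) μ)
    (hL2 : ∀ i, MemLp (v i) 2 μ)
    (hpos : ∀ i, ∀ᵐ ω ∂μ, 0 ≤ v i ω)
    (δ : ℝ) (hδ0 : 0 ≤ δ) (hδ1 : δ < 1)
    (hmom : ∀ i, μ[fun ω => (v i ω) ^ 2] = 1 - δ)
    (ξ : ℝ) (hξ0 : 0 < ξ) (hξ1 : ξ < 1)
    (ΓS : ℝ)
    (hΓS : ΓS = Real.sqrt ((I : ℝ) * (1 - δ) * (1 + (I : ℝ) - (I : ℝ) * ξ) / (1 - ξ))) :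
    μ {ω | ΓS ≤ ∑ i, v i ω} ≤ ENNReal.ofReal (1 - ξ) :=
  sum_exceeds_GammaS_bound_general (mΩ := mΩ) μ I hI v hindep hL2 δ hδ1 hmom ξ hξ1 ΓS hΓS
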